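/- arXiv:1806.10482 — 2 statements merged into one kernel-verified Lean document; each statement's English description precedes it below -/
import Mathlib

section
/- Under the linear coercivity assumptions, let 𝒟 be a gradient discretisation, ū the unique solution of the weak linear problem and u_𝒟 ∈ X_𝒟 a solution of the linear gradient scheme. Then the reverse inequalities hold: W_𝒟(𝐚(Gū)+𝐅) ≤ ᾱ ‖Gū − G_𝒟 u_𝒟‖_𝐋 + ᾱ C_𝒟 ‖ū − P_𝒟 u_𝒟‖_L (in particular W_𝒟(𝐚(Gū)+𝐅) is bounded by ᾱ times the total discretisation error) and S_𝒟(ū) ≤ ‖ū − P_𝒟 u_𝒟‖_L + ‖Gū − G_𝒟 u_𝒟‖_𝐋. -/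
open NormedSpace Filter Topology

noncomputable section

variable {L Lv : Type*} [NormedAddCommGroup L] [NormedSpace ℝ L]
  [NormedAddCommGroup Lv] [NormedSpace ℝ Lv]

/-- The seminorm `|u|_{L,V} = sup_{μ ∈ V \ {0}} |⟨μ,u⟩| / ‖μ‖` (equal to `0` when `V = {0}`,
since `sSup ∅ = 0` in `ℝ`). -/
noncomputable def semV (V : Submodule ℝ (StrongDual ℝ L)) (u : L) : ℝ :=
  sSup ((fun μ : StrongDual ℝ L => |μ u| / ‖μ‖) '' {μ : StrongDual ℝ L | μ ∈ V ∧ μ ≠ 0})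

/-- `IsWDpair W_G G φ w` says that `φ ∈ 𝐖_D` with `D φ = w`, i.e. the abstract Stokes formula
`⟨φ, G u⟩ + ⟨w, u⟩ = 0` holds for all `u ∈ W_G`. -/
def IsWDpair (WG : Submodule ℝ L) (G : ↥WG →ₗ[ℝ] Lv) (φ : StrongDual ℝ Lv) (w : StrongDual ℝ L) : Prop :=
  ∀ u : ↥WG, φ (G u) + w (u : L) = 0

/-- A gradient discretisation `𝒟 = (X_𝒟, P_𝒟, G_𝒟)`: a finite-dimensional real vector space
`X`, a function reconstruction `P : X → L` and a gradient reconstruction `Gd : X → Lv`, such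
that `v ↦ (|P v|_{L,V}^p + ‖Gd v‖^p)^{1/p}` is a norm on `X` (definiteness is the only
non-automatic condition). -/
structure GradDisc (L Lv : Type*) [NormedAddCommGroup L] [NormedSpace ℝ L]
    [NormedAddCommGroup Lv] [NormedSpace ℝ Lv]
    (V : Submodule ℝ (StrongDual ℝ L)) (p : ℝ) where
  X : Type
  [instAddCommGroup : AddCommGroup X]
  [instModule : Module ℝ X]
  [instFin : FiniteDimensional ℝ X]
  P : X →ₗ[ℝ] L
  Gd : X →ₗ[ℝ] Lv
  dnorm_definite : ∀ v : X, (semV V (P v) ^ p + ‖Gd v‖ ^ p) ^ (1 / p) = 0 → v = 0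

attribute [instance] GradDisc.instAddCommGroup GradDisc.instModule GradDisc.instFin

namespace GradDisc

variable {V : Submodule ℝ (StrongDual ℝ L)} {p : ℝ}

/-- The discrete norm `‖v‖_𝒟 = (|P_𝒟 v|_{L,V}^p + ‖G_𝒟 v‖_Lv^p)^{1/p}`. -/
noncomputable def dnorm (D : GradDisc L Lv V p) (v : D.X) : ℝ :=
  (semV V (D.P v) ^ p + ‖D.Gd v‖ ^ p) ^ (1 / p)

/-- `C_𝒟 = max_{v ≠ 0} ‖P_𝒟 v‖_L / ‖v‖_𝒟`. -/
noncomputable def CD (D : GradDisc L Lv V p) : ℝ :=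
  sSup ((fun v : D.X => ‖D.P v‖ / D.dnorm v) '' {v : D.X | v ≠ 0})

/-- `W_𝒟(φ) = sup_{u ≠ 0} |⟨φ, G_𝒟 u⟩ + ⟨D φ, P_𝒟 u⟩| / ‖u‖_𝒟`, where `w = D φ`. -/
noncomputable def WDdef (D : GradDisc L Lv V p) (φ : StrongDual ℝ Lv) (w : StrongDual ℝ L) : ℝ :=
  sSup ((fun u : D.X => |φ (D.Gd u) + w (D.P u)| / D.dnorm u) '' {u : D.X | u ≠ 0})

/-- `S_𝒟(φ) = min_v (‖P_𝒟 v − φ‖_L + ‖G_𝒟 v − G φ‖_Lv)`, where `gφ = G φ`. -/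
noncomputable def SDdef (D : GradDisc L Lv V p) (φ : L) (gφ : Lv) : ℝ :=
  sInf (Set.range fun v : D.X => ‖D.P v - φ‖ + ‖D.Gd v - gφ‖)

end GradDisc

/-- Coercivity of a sequence of gradient discretisations: `sup_m C_{𝒟_m} < ∞`. -/
def Coercive {V : Submodule ℝ (StrongDual ℝ L)} {p : ℝ} (D : ℕ → GradDisc L Lv V p) : Prop :=
  ∃ C : ℝ, ∀ m : ℕ, (D m).CD ≤ C

/-- Limit-conformity: `W_{𝒟_m}(φ) → 0` for every `φ ∈ 𝐖_D` (with `w = D φ`). -/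
def LimitConforming (WG : Submodule ℝ L) (G : ↥WG →ₗ[ℝ] Lv)
    {V : Submodule ℝ (StrongDual ℝ L)} {p : ℝ} (D : ℕ → GradDisc L Lv V p) : Prop :=
  ∀ (φ : StrongDual ℝ Lv) (w : StrongDual ℝ L), IsWDpair WG G φ w →
    Filter.Tendsto (fun m => (D m).WDdef φ w) Filter.atTop (𝓝 0)

/-- Consistency: `S_{𝒟_m}(φ) → 0` for every `φ ∈ W_G`. -/
def Consistent (WG : Submodule ℝ L) (G : ↥WG →ₗ[ℝ] Lv)
    {V : Submodule ℝ (StrongDual ℝ L)} {p : ℝ} (D : ℕ → GradDisc L Lv V p) : Prop :=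
  ∀ u : ↥WG, Filter.Tendsto (fun m => (D m).SDdef (u : L) (G u)) Filter.atTop (𝓝 0)

/-- Compactness: bounded discrete sequences have relatively compact reconstructions in `L`. -/
def CompactSeq {V : Submodule ℝ (StrongDual ℝ L)} {p : ℝ} (D : ℕ → GradDisc L Lv V p) : Prop :=
  ∀ u : (m : ℕ) → (D m).X, (∃ C : ℝ, ∀ m : ℕ, (D m).dnorm (u m) ≤ C) →
    IsCompact (closure (Set.range fun m => (D m).P (u m)))

/-!
By the weak equation, `𝐚(Gū) + 𝐅 ∈ 𝐖_D` with `D(𝐚(Gū) + 𝐅) = a(ū) - f`. Subtracting the gradient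
scheme tested with `v` turns the numerator of `W_𝒟` into
`⟨𝐚(Gū - G_𝒟 u_𝒟), G_𝒟 v⟩ + ⟨a(ū - P_𝒟 u_𝒟), P_𝒟 v⟩`, which the continuity of `𝐚` and `a`
bounds through `‖G_𝒟 v‖ ≤ ‖v‖_𝒟` and `‖P_𝒟 v‖_L ≤ C_𝒟 ‖v‖_𝒟`. The bound on `S_𝒟(ū)` is the
value of the minimised quantity at `u_𝒟`.
-/

lemma abs_apply_div_norm_le (μ : StrongDual ℝ L) (u : L) : |μ u| / ‖μ‖ ≤ ‖u‖ :=
  div_le_of_le_mul₀ (norm_nonneg μ) (norm_nonneg u) <| by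
    simpa only [Real.norm_eq_abs, mul_comm ‖u‖] using μ.le_opNorm u

section SemV

variable (V : Submodule ℝ (StrongDual ℝ L))

lemma le_semV {μ : StrongDual ℝ L} (hμ : μ ∈ V ∧ μ ≠ 0) (u : L) : |μ u| / ‖μ‖ ≤ semV V u :=
  le_csSup ⟨‖u‖, by rintro _ ⟨ν, hν, rfl⟩; exact abs_apply_div_norm_le ν u⟩ ⟨μ, hμ, rfl⟩

lemma semV_nonneg (u : L) : 0 ≤ semV V u :=
  Real.sSup_nonneg (by rintro _ ⟨μ, -, rfl⟩; positivity)

lemma semV_le_norm (u : L) : semV V u ≤ ‖u‖ :=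
  Real.sSup_le (by rintro _ ⟨μ, hμ, rfl⟩; exact abs_apply_div_norm_le μ u) (norm_nonneg u)

lemma semV_add_le (a b : L) : semV V (a + b) ≤ semV V a + semV V b := by
  refine Real.sSup_le ?_ (add_nonneg (semV_nonneg V a) (semV_nonneg V b))
  rintro _ ⟨μ, hμ, rfl⟩
  calc |μ (a + b)| / ‖μ‖ ≤ |μ a| / ‖μ‖ + |μ b| / ‖μ‖ := by
        rw [← add_div, map_add]; gcongr; exact abs_add_le _ _
    _ ≤ semV V a + semV V b := add_le_add (le_semV V hμ a) (le_semV V hμ b)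

lemma semV_smul_le (c : ℝ) (u : L) : semV V (c • u) ≤ ‖c‖ * semV V u := by
  refine Real.sSup_le ?_ (mul_nonneg (norm_nonneg c) (semV_nonneg V u))
  rintro _ ⟨μ, hμ, rfl⟩
  simpa only [map_smul, smul_eq_mul, abs_mul, mul_div_assoc, Real.norm_eq_abs]
    using mul_le_mul_of_nonneg_left (le_semV V hμ u) (abs_nonneg c)

def semVSeminorm : Seminorm ℝ L :=
  .ofSMulLE (semV V)
    (le_antisymm ((semV_le_norm V 0).trans_eq norm_zero) (semV_nonneg V 0))
    (semV_add_le V) (semV_smul_le V)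

lemma semV_smul (c : ℝ) (u : L) : semV V (c • u) = |c| * semV V u :=
  map_smul_eq_mul (semVSeminorm V) c u

end SemV

namespace IsWDpair

variable {WG : Submodule ℝ L} {G : ↥WG →ₗ[ℝ] Lv} {φ : StrongDual ℝ Lv}

lemma unique (hWG : Dense (WG : Set L)) {w w' : StrongDual ℝ L}
    (hw : IsWDpair WG G φ w) (hw' : IsWDpair WG G φ w') : w = w' :=
  DFunLike.coe_injective <| Continuous.ext_on hWG w.continuous w'.continuous fun x hx => by
    linarith [hw ⟨x, hx⟩, hw' ⟨x, hx⟩]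

end IsWDpair

lemma isWDpair_of_weak_solution {WG : Submodule ℝ L} {G : ↥WG →ₗ[ℝ] Lv}
    {aV : Lv →L[ℝ] StrongDual ℝ Lv} {aS : L →L[ℝ] StrongDual ℝ L}
    {f : StrongDual ℝ L} {F : StrongDual ℝ Lv} {ubar : ↥WG}
    (hubar : ∀ v : ↥WG, aV (G ubar) (G v) + aS (ubar : L) (v : L) = f (v : L) - F (G v)) :
    IsWDpair WG G (aV (G ubar) + F) (aS (ubar : L) - f) := fun v => by
  simp only [_root_.add_apply, _root_.sub_apply]
  linarith [hubar v]

namespace GradDisc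

variable {V : Submodule ℝ (StrongDual ℝ L)} {p : ℝ} (D : GradDisc L Lv V p)

lemma dnorm_nonneg (v : D.X) : 0 ≤ D.dnorm v := by
  unfold dnorm
  have := semV_nonneg V (D.P v)
  positivity

lemma dnorm_pos {v : D.X} (hv : v ≠ 0) : 0 < D.dnorm v :=
  (D.dnorm_nonneg v).lt_of_ne' fun h => hv (D.dnorm_definite v h)

lemma norm_Gd_le_dnorm (hp : 0 < p) (v : D.X) : ‖D.Gd v‖ ≤ D.dnorm v := by
  have := semV_nonneg V (D.P v)
  calc ‖D.Gd v‖ = (‖D.Gd v‖ ^ p) ^ (1 / p) := by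
        rw [one_div, Real.rpow_rpow_inv (norm_nonneg _) hp.ne']
    _ ≤ D.dnorm v := by
        unfold dnorm
        gcongr
        exact le_add_of_nonneg_left (by positivity)

lemma dnorm_smul (hp : 0 < p) (c : ℝ) (v : D.X) : D.dnorm (c • v) = |c| * D.dnorm v := by
  have := semV_nonneg V (D.P v)
  simp only [dnorm, map_smul, semV_smul, norm_smul, Real.norm_eq_abs]
  rw [Real.mul_rpow (abs_nonneg c) this, Real.mul_rpow (abs_nonneg c) (norm_nonneg _), ← mul_add,
    Real.mul_rpow (by positivity) (by positivity), one_div,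
    Real.rpow_rpow_inv (abs_nonneg c) hp.ne']

/-- Minkowski's inequality in `ℝ²`, applied to `(|P_𝒟 v|_{L,V}, ‖G_𝒟 v‖)`. -/
lemma dnorm_add_le (hp : 1 ≤ p) (a b : D.X) : D.dnorm (a + b) ≤ D.dnorm a + D.dnorm b := by
  have hsem := semV_add_le V (D.P a) (D.P b)
  have hG := norm_add_le (D.Gd a) (D.Gd b)
  have := semV_nonneg V (D.P a + D.P b)
  have hmink := Real.Lp_add_le_of_nonneg Finset.univ
    (f := ![semV V (D.P a), ‖D.Gd a‖]) (g := ![semV V (D.P b), ‖D.Gd b‖]) hp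
    (by simp [Fin.forall_fin_two, semV_nonneg]) (by simp [Fin.forall_fin_two, semV_nonneg])
  simp only [Fin.sum_univ_two, Matrix.cons_val_zero, Matrix.cons_val_one] at hmink
  refine le_trans ?_ hmink
  simp only [dnorm, map_add]
  gcongr

/-- `‖·‖_𝒟` is a norm on the finite-dimensional space `X_𝒟`, so `P_𝒟` is bounded for it. -/
lemma bddAbove_norm_P_div_dnorm (hp : 1 ≤ p) :
    BddAbove ((fun v : D.X => ‖D.P v‖ / D.dnorm v) '' {v : D.X | v ≠ 0}) := by
  have hp0 : 0 < p := zero_lt_one.trans_le hp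
  let _ : NormedAddCommGroup D.X := AddGroupNorm.toNormedAddCommGroup
    { toFun := D.dnorm
      map_zero' := by simpa using D.dnorm_smul hp0 0 0
      add_le' := D.dnorm_add_le hp
      neg' := fun v => by simpa using D.dnorm_smul hp0 (-1) v
      eq_zero_of_map_eq_zero' := D.dnorm_definite }
  let _ : NormedSpace ℝ D.X := ⟨fun c v => (D.dnorm_smul hp0 c v).le⟩
  refine ⟨‖LinearMap.toContinuousLinearMap D.P‖, ?_⟩
  rintro _ ⟨v, -, rfl⟩
  exact div_le_of_le_mul₀ (D.dnorm_nonneg v) (norm_nonneg _)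
    ((LinearMap.toContinuousLinearMap D.P).le_opNorm v)

lemma CD_nonneg : 0 ≤ D.CD :=
  Real.sSup_nonneg (by rintro _ ⟨v, -, rfl⟩; exact div_nonneg (norm_nonneg _) (D.dnorm_nonneg v))

lemma norm_P_le_CD_mul_dnorm (hp : 1 ≤ p) (v : D.X) : ‖D.P v‖ ≤ D.CD * D.dnorm v := by
  rcases eq_or_ne v 0 with rfl | hv
  · simpa using mul_nonneg D.CD_nonneg (D.dnorm_nonneg 0)
  · exact (div_le_iff₀ (D.dnorm_pos hv)).mp (le_csSup (D.bddAbove_norm_P_div_dnorm hp) ⟨v, hv, rfl⟩)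

lemma WDdef_le {φ : StrongDual ℝ Lv} {w : StrongDual ℝ L} {M : ℝ} (hM : 0 ≤ M)
    (h : ∀ v : D.X, |φ (D.Gd v) + w (D.P v)| ≤ M * D.dnorm v) : D.WDdef φ w ≤ M :=
  Real.sSup_le (by rintro _ ⟨v, hv, rfl⟩; exact div_le_of_le_mul₀ (D.dnorm_nonneg v) hM (h v)) hM

lemma SDdef_le (φ : L) (gφ : Lv) (v : D.X) : D.SDdef φ gφ ≤ ‖D.P v - φ‖ + ‖D.Gd v - gφ‖ :=
  csInf_le ⟨0, by rintro _ ⟨v, rfl⟩; positivity⟩ ⟨v, rfl⟩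

lemma abs_apply_Gd_add_apply_P_le (hp : 1 ≤ p) {A : Lv →L[ℝ] StrongDual ℝ Lv}
    {B : L →L[ℝ] StrongDual ℝ L} {abar : ℝ} (hA : ‖A‖ ≤ abar) (hB : ‖B‖ ≤ abar) (x : Lv) (y : L) (v : D.X) :
    |A x (D.Gd v) + B y (D.P v)| ≤ (abar * ‖x‖ + abar * D.CD * ‖y‖) * D.dnorm v :=
  calc |A x (D.Gd v) + B y (D.P v)| ≤ ‖A‖ * ‖x‖ * ‖D.Gd v‖ + ‖B‖ * ‖y‖ * ‖D.P v‖ :=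
        (abs_add_le _ _).trans (add_le_add (A.le_opNorm₂ _ _) (B.le_opNorm₂ _ _))
    _ ≤ abar * ‖x‖ * D.dnorm v + abar * ‖y‖ * (D.CD * D.dnorm v) := by
        have := (norm_nonneg A).trans hA
        gcongr
        exacts [D.norm_Gd_le_dnorm (zero_lt_one.trans_le hp) v, D.norm_P_le_CD_mul_dnorm hp v]
    _ = (abar * ‖x‖ + abar * D.CD * ‖y‖) * D.dnorm v := by ring

end GradDisc

theorem linear_gradient_scheme_reverse_estimates_general
    (WG : Submodule ℝ L) (hWGdense : Dense (WG : Set L))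
    (G : ↥WG →ₗ[ℝ] Lv)
    (V : Submodule ℝ (StrongDual ℝ L))
    (aV : Lv →L[ℝ] StrongDual ℝ Lv) (aS : L →L[ℝ] StrongDual ℝ L)
    (abar : ℝ) (haVnorm : ‖aV‖ ≤ abar) (haSnorm : ‖aS‖ ≤ abar)
    (f : StrongDual ℝ L) (F : StrongDual ℝ Lv)
    (D : GradDisc L Lv V 2)
    (ubar : ↥WG)
    (hubar : ∀ v : ↥WG,
      aV (G ubar) (G v) + aS (ubar : L) (v : L) = f (v : L) - F (G v))
    (u : D.X)
    (hu : ∀ v : D.X,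
      aV (D.Gd u) (D.Gd v) + aS (D.P u) (D.P v) = f (D.P v) - F (D.Gd v)) :
    (∀ w : StrongDual ℝ L, IsWDpair WG G (aV (G ubar) + F) w →
        D.WDdef (aV (G ubar) + F) w ≤
          abar * ‖G ubar - D.Gd u‖ + abar * D.CD * ‖(ubar : L) - D.P u‖) ∧
    D.SDdef (ubar : L) (G ubar) ≤ ‖(ubar : L) - D.P u‖ + ‖G ubar - D.Gd u‖ := by
  refine ⟨fun w hw => ?_, by simpa only [norm_sub_rev] using D.SDdef_le (ubar : L) (G ubar) u⟩
  obtain rfl := (isWDpair_of_weak_solution hubar).unique hWGdense hw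
  have habar : 0 ≤ abar := (norm_nonneg aV).trans haVnorm
  have hCD := D.CD_nonneg
  refine D.WDdef_le (by positivity) fun v => ?_
  have herr : (aV (G ubar) + F) (D.Gd v) + (aS (ubar : L) - f) (D.P v) =
      aV (G ubar - D.Gd u) (D.Gd v) + aS ((ubar : L) - D.P u) (D.P v) := by
    simp only [_root_.add_apply, _root_.sub_apply, map_sub]
    linarith [hu v]
  rw [herr]
  exact D.abs_apply_Gd_add_apply_P_le one_le_two haVnorm haSnorm _ _ v

theorem linear_gradient_scheme_reverse_estimates
    [CompleteSpace L] [CompleteSpace Lv]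
    [TopologicalSpace.SeparableSpace L] [TopologicalSpace.SeparableSpace Lv]
    (hreflL : Function.Surjective ⇑(inclusionInDoubleDual ℝ L))
    (hreflLv : Function.Surjective ⇑(inclusionInDoubleDual ℝ Lv))
    (WG : Submodule ℝ L) (hWGdense : Dense (WG : Set L))
    (G : ↥WG →ₗ[ℝ] Lv)
    (hGclosed : IsClosed (Set.range fun u : ↥WG => ((u : L), G u)))
    (V : Submodule ℝ (StrongDual ℝ L)) (hVclosed : IsClosed (V : Set (StrongDual ℝ L)))
    (CWGV : ℝ) (hCWGV : 0 < CWGV)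
    (hequiv : ∀ u : ↥WG, (‖(u : L)‖ ^ (2:ℝ) + ‖G u‖ ^ (2:ℝ)) ^ (1/2 : ℝ) ≤
      CWGV * (semV V (u : L) ^ (2:ℝ) + ‖G u‖ ^ (2:ℝ)) ^ (1/2 : ℝ))
    (aV : Lv →L[ℝ] StrongDual ℝ Lv) (aS : L →L[ℝ] StrongDual ℝ L)
    (abar : ℝ) (haVnorm : ‖aV‖ ≤ abar) (haSnorm : ‖aS‖ ≤ abar)
    (alph : ℝ) (halph : 0 < alph)
    (haVcoer : ∀ gv : Lv, alph * ‖gv‖ ^ (2:ℝ) ≤ aV gv gv)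
    (haScoer : ∀ v : L, alph * semV V v ^ (2:ℝ) ≤ aS v v)
    (f : StrongDual ℝ L) (F : StrongDual ℝ Lv)
    (D : GradDisc L Lv V 2)
    (ubar : ↥WG)
    (hubar : ∀ v : ↥WG,
      aV (G ubar) (G v) + aS (ubar : L) (v : L) = f (v : L) - F (G v))
    (u : D.X)
    (hu : ∀ v : D.X,
      aV (D.Gd u) (D.Gd v) + aS (D.P u) (D.P v) = f (D.P v) - F (D.Gd v)) :
    (∀ w : StrongDual ℝ L, IsWDpair WG G (aV (G ubar) + F) w →
        D.WDdef (aV (G ubar) + F) w ≤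
          abar * ‖G ubar - D.Gd u‖ + abar * D.CD * ‖(ubar : L) - D.P u‖) ∧
    D.SDdef (ubar : L) (G ubar) ≤ ‖(ubar : L) - D.P u‖ + ‖G ubar - D.Gd u‖ :=
  linear_gradient_scheme_reverse_estimates_general WG hWGdense G V aV aS abar haVnorm haSnorm f F D
    ubar hubar u hu
end
end

section
/- Under the linear coercivity assumptions, let (𝒟_m)_{m∈ℕ} be a sequence of gradient discretisations, for each m let u_m ∈ X_{𝒟_m} solve the linear gradient scheme, and let ū be the solution of the weak linear problem. If P_{𝒟_m} u_m converges strongly in L to ū and G_{𝒟_m} u_m converges weakly in 𝐋 to Gū, then G_{𝒟_m} u_m converges strongly in 𝐋 to Gū. -/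
/-!
Testing the scheme with `u_m` itself gives `⟨𝐚(G_𝒟 u_m), G_𝒟 u_m⟩ = ⟨f, P_𝒟 u_m⟩ − ⟨𝐅, G_𝒟 u_m⟩ −
⟨a(P_𝒟 u_m), P_𝒟 u_m⟩`, whose right-hand side converges (strongly in `L`, weakly in `𝐋`) to the
same expression for `ū`, i.e. to `⟨𝐚(Gū), Gū⟩`. Expanding `⟨𝐚(G_𝒟 u_m − Gū), G_𝒟 u_m − Gū⟩`, the
cross terms converge by weak convergence, so this quantity tends to `0`, and coercivity of `𝐚`
turns that into strong convergence.
-/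

open NormedSpace Filter Topology

noncomputable section

variable {L Lv : Type*} [NormedAddCommGroup L] [NormedSpace ℝ L]
  [NormedAddCommGroup Lv] [NormedSpace ℝ Lv]

section WeakToStrong

variable {E ι : Type*} [NormedAddCommGroup E] [NormedSpace ℝ E] {l : Filter ι}

theorem tendsto_apply_sub_apply_sub_of_weak (a : E →L[ℝ] StrongDual ℝ E) {x : ι → E} {x₀ : E}
    (hweak : ∀ g : StrongDual ℝ E, Tendsto (fun i => g (x i)) l (𝓝 (g x₀)))
    (henergy : Tendsto (fun i => a (x i) (x i)) l (𝓝 (a x₀ x₀))) :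
    Tendsto (fun i => a (x i - x₀) (x i - x₀)) l (𝓝 0) := by
  have hleft : Tendsto (fun i => a (x i) x₀) l (𝓝 (a x₀ x₀)) := by
    simpa using hweak (a.flip x₀)
  have hlim := ((henergy.sub hleft).sub (hweak (a x₀))).add_const (a x₀ x₀)
  rw [show a x₀ x₀ - a x₀ x₀ - a x₀ x₀ + a x₀ x₀ = 0 by ring] at hlim
  refine hlim.congr fun i => ?_
  simp only [map_sub, sub_apply]
  ring

theorem tendsto_norm_zero_of_coercive (a : E →L[ℝ] StrongDual ℝ E) {α : ℝ} (hα : 0 < α)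
    (hcoer : ∀ v, α * ‖v‖ ^ 2 ≤ a v v) {v : ι → E}
    (h : Tendsto (fun i => a (v i) (v i)) l (𝓝 0)) :
    Tendsto (fun i => ‖v i‖) l (𝓝 0) := by
  have hsq : Tendsto (fun i => ‖v i‖ ^ 2) l (𝓝 0) := by
    refine squeeze_zero (fun i => sq_nonneg _) (fun i => ?_) (by simpa using h.div_const α)
    rw [le_div_iff₀ hα, mul_comm]
    exact hcoer (v i)
  simpa using hsq.sqrt

theorem tendsto_of_weak_of_tendsto_energy (a : E →L[ℝ] StrongDual ℝ E) {α : ℝ} (hα : 0 < α)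
    (hcoer : ∀ v, α * ‖v‖ ^ 2 ≤ a v v) {x : ι → E} {x₀ : E}
    (hweak : ∀ g : StrongDual ℝ E, Tendsto (fun i => g (x i)) l (𝓝 (g x₀)))
    (henergy : Tendsto (fun i => a (x i) (x i)) l (𝓝 (a x₀ x₀))) :
    Tendsto x l (𝓝 x₀) :=
  tendsto_iff_norm_sub_tendsto_zero.mpr <|
    tendsto_norm_zero_of_coercive a hα hcoer (tendsto_apply_sub_apply_sub_of_weak a hweak henergy)

end WeakToStrong

theorem strong_convergence_of_gradients_general
    (WG : Submodule ℝ L)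
    (G : ↥WG →ₗ[ℝ] Lv)
    (V : Submodule ℝ (StrongDual ℝ L))
    (aV : Lv →L[ℝ] StrongDual ℝ Lv) (aS : L →L[ℝ] StrongDual ℝ L)
    (alph : ℝ) (halph : 0 < alph)
    (haVcoer : ∀ gv : Lv, alph * ‖gv‖ ^ (2:ℝ) ≤ aV gv gv)
    (f : StrongDual ℝ L) (F : StrongDual ℝ Lv)
    (D : ℕ → GradDisc L Lv V 2)
    (um : (m : ℕ) → (D m).X)
    (hum : ∀ m : ℕ, ∀ v : (D m).X,
      aV ((D m).Gd (um m)) ((D m).Gd v) + aS ((D m).P (um m)) ((D m).P v)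
        = f ((D m).P v) - F ((D m).Gd v))
    (ubar : ↥WG)
    (hubar : ∀ v : ↥WG,
      aV (G ubar) (G v) + aS (ubar : L) (v : L) = f (v : L) - F (G v))
    (hPconv : Tendsto (fun m => ‖(D m).P (um m) - (ubar : L)‖) atTop (𝓝 0))
    (hGconv : ∀ g : StrongDual ℝ Lv,
      Tendsto (fun m => g ((D m).Gd (um m))) atTop (𝓝 (g (G ubar)))) :
    Tendsto (fun m => ‖(D m).Gd (um m) - G ubar‖) atTop (𝓝 0) := by
  have hP : Tendsto (fun m => (D m).P (um m)) atTop (𝓝 (ubar : L)) :=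
    tendsto_iff_norm_sub_tendsto_zero.mpr hPconv
  have henergy : Tendsto (fun m => aV ((D m).Gd (um m)) ((D m).Gd (um m))) atTop
      (𝓝 (aV (G ubar) (G ubar))) := by
    have hquad : Continuous fun z : L => aS z z := aS.continuous.clm_apply continuous_id
    have hrhs := ((f.continuous.tendsto _).comp hP |>.sub (hGconv F)).sub
      ((hquad.tendsto _).comp hP)
    rw [show f ubar - F (G ubar) - aS ubar ubar = aV (G ubar) (G ubar) by linarith [hubar ubar]]
      at hrhs
    refine hrhs.congr fun m => ?_
    simp only [Function.comp_apply]
    linarith [hum m (um m)]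
  have hcoer : ∀ gv : Lv, alph * ‖gv‖ ^ 2 ≤ aV gv gv := by
    simpa only [Real.rpow_two] using haVcoer
  exact tendsto_iff_norm_sub_tendsto_zero.mp
    (tendsto_of_weak_of_tendsto_energy aV halph hcoer hGconv henergy)

theorem strong_convergence_of_gradients
    [CompleteSpace L] [CompleteSpace Lv]
    [TopologicalSpace.SeparableSpace L] [TopologicalSpace.SeparableSpace Lv]
    (hreflL : Function.Surjective ⇑(inclusionInDoubleDual ℝ L))
    (hreflLv : Function.Surjective ⇑(inclusionInDoubleDual ℝ Lv))
    (WG : Submodule ℝ L) (hWGdense : Dense (WG : Set L))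
    (G : ↥WG →ₗ[ℝ] Lv)
    (hGclosed : IsClosed (Set.range fun u : ↥WG => ((u : L), G u)))
    (V : Submodule ℝ (StrongDual ℝ L)) (hVclosed : IsClosed (V : Set (StrongDual ℝ L)))
    (CWGV : ℝ) (hCWGV : 0 < CWGV)
    (hequiv : ∀ u : ↥WG, (‖(u : L)‖ ^ (2:ℝ) + ‖G u‖ ^ (2:ℝ)) ^ (1/2 : ℝ) ≤
      CWGV * (semV V (u : L) ^ (2:ℝ) + ‖G u‖ ^ (2:ℝ)) ^ (1/2 : ℝ))
    (aV : Lv →L[ℝ] StrongDual ℝ Lv) (aS : L →L[ℝ] StrongDual ℝ L)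
    (abar : ℝ) (haVnorm : ‖aV‖ ≤ abar) (haSnorm : ‖aS‖ ≤ abar)
    (alph : ℝ) (halph : 0 < alph)
    (haVcoer : ∀ gv : Lv, alph * ‖gv‖ ^ (2:ℝ) ≤ aV gv gv)
    (haScoer : ∀ v : L, alph * semV V v ^ (2:ℝ) ≤ aS v v)
    (f : StrongDual ℝ L) (F : StrongDual ℝ Lv)
    (D : ℕ → GradDisc L Lv V 2)
    (um : (m : ℕ) → (D m).X)
    (hum : ∀ m : ℕ, ∀ v : (D m).X,
      aV ((D m).Gd (um m)) ((D m).Gd v) + aS ((D m).P (um m)) ((D m).P v)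
        = f ((D m).P v) - F ((D m).Gd v))
    (ubar : ↥WG)
    (hubar : ∀ v : ↥WG,
      aV (G ubar) (G v) + aS (ubar : L) (v : L) = f (v : L) - F (G v))
    (hPconv : Tendsto (fun m => ‖(D m).P (um m) - (ubar : L)‖) atTop (𝓝 0))
    (hGconv : ∀ g : StrongDual ℝ Lv,
      Tendsto (fun m => g ((D m).Gd (um m))) atTop (𝓝 (g (G ubar)))) :
    Tendsto (fun m => ‖(D m).Gd (um m) - G ubar‖) atTop (𝓝 0) :=
  strong_convergence_of_gradients_general WG G V aV aS alph halph haVcoer f F D um hum ubar hubar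
    hPconv hGconv
end
end
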